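/- Mixed parameterization identities (Corollary 6, algebraic core): Suppose S is a stability matrix for the output-feedback realization R with controller K, assume z•1 − A is invertible, and set G := C * (z•1 − A)⁻¹ * B + D. Then the blocks (Syx, Syy, Φux, Φuy) of S satisfy: Syx − G * Φux = C * (z•1 − A)⁻¹, Syy − G * Φuy = 1, Syx * (z•1 − A) = Syy * C, and Φux * (z•1 − A) = Φuy * C. -/

import Mathlib

open Matrix

noncomputable section

set_option synthInstance.maxHeartbeats 1000000
set_option maxHeartbeats 1000000

/-- A 3×3 block matrix. -/
def b3 {α n₁ n₂ n₃ m₁ m₂ m₃ : Type*}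
    (M₁₁ : Matrix n₁ m₁ α) (M₁₂ : Matrix n₁ m₂ α) (M₁₃ : Matrix n₁ m₃ α)
    (M₂₁ : Matrix n₂ m₁ α) (M₂₂ : Matrix n₂ m₂ α) (M₂₃ : Matrix n₂ m₃ α)
    (M₃₁ : Matrix n₃ m₁ α) (M₃₂ : Matrix n₃ m₂ α) (M₃₃ : Matrix n₃ m₃ α) :
    Matrix (n₁ ⊕ n₂ ⊕ n₃) (m₁ ⊕ m₂ ⊕ m₃) α :=
  Matrix.fromBlocks M₁₁ (Matrix.fromCols M₁₂ M₁₃)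
    (Matrix.fromRows M₂₁ M₃₁) (Matrix.fromBlocks M₂₂ M₂₃ M₃₂ M₃₃)

/-- A real constant matrix regarded as a matrix of rational transfer functions. -/
def mR {n m : Type*} (M : Matrix n m ℝ) : Matrix n m (RatFunc ℝ) :=
  M.map (algebraMap ℝ (RatFunc ℝ))

/-- The transfer-function variable `z`. -/
def zz : RatFunc ℝ := RatFunc.X

/- With `Z := z•1 - A`, the realization gives `1 - R = [[Z, -B, 0], [0, 1, -K], [-C, -D, 1]]`.
The first and third columns of `(1 - R) S = 1` read `Z Φx - B Φu = W`, `Sy = C Φx + D Φu + V`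
with `(W, V) = (1, 0)` resp. `(0, 1)`; eliminating `Φx = Z⁻¹ (W + B Φu)` gives the first two
identities. The first column of `S (1 - R) = 1`, in the rows of `Φux` and `Syx`, gives the last two. -/

section BlockMatrix

variable {α : Type*} {n₁ n₂ n₃ m₁ m₂ m₃ k₁ k₂ k₃ : Type*}

theorem b3_inj
    {M₁₁ N₁₁ : Matrix n₁ m₁ α} {M₁₂ N₁₂ : Matrix n₁ m₂ α} {M₁₃ N₁₃ : Matrix n₁ m₃ α}
    {M₂₁ N₂₁ : Matrix n₂ m₁ α} {M₂₂ N₂₂ : Matrix n₂ m₂ α} {M₂₃ N₂₃ : Matrix n₂ m₃ α}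
    {M₃₁ N₃₁ : Matrix n₃ m₁ α} {M₃₂ N₃₂ : Matrix n₃ m₂ α} {M₃₃ N₃₃ : Matrix n₃ m₃ α} :
    b3 M₁₁ M₁₂ M₁₃ M₂₁ M₂₂ M₂₃ M₃₁ M₃₂ M₃₃ = b3 N₁₁ N₁₂ N₁₃ N₂₁ N₂₂ N₂₃ N₃₁ N₃₂ N₃₃ ↔
      M₁₁ = N₁₁ ∧ M₁₂ = N₁₂ ∧ M₁₃ = N₁₃ ∧ M₂₁ = N₂₁ ∧ M₂₂ = N₂₂ ∧ M₂₃ = N₂₃ ∧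
        M₃₁ = N₃₁ ∧ M₃₂ = N₃₂ ∧ M₃₃ = N₃₃ := by
  simp only [b3, fromBlocks_inj, fromCols_ext_iff, fromRows_ext_iff]
  tauto

theorem b3_one [Zero α] [One α] [DecidableEq n₁] [DecidableEq n₂] [DecidableEq n₃] :
    b3 (1 : Matrix n₁ n₁ α) 0 0 0 (1 : Matrix n₂ n₂ α) 0 0 0 (1 : Matrix n₃ n₃ α) = 1 := by
  ext (i | i | i) (j | j | j) <;> simp [b3, one_apply]

theorem b3_sub [Sub α]
    (M₁₁ N₁₁ : Matrix n₁ m₁ α) (M₁₂ N₁₂ : Matrix n₁ m₂ α) (M₁₃ N₁₃ : Matrix n₁ m₃ α)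
    (M₂₁ N₂₁ : Matrix n₂ m₁ α) (M₂₂ N₂₂ : Matrix n₂ m₂ α) (M₂₃ N₂₃ : Matrix n₂ m₃ α)
    (M₃₁ N₃₁ : Matrix n₃ m₁ α) (M₃₂ N₃₂ : Matrix n₃ m₂ α) (M₃₃ N₃₃ : Matrix n₃ m₃ α) :
    b3 M₁₁ M₁₂ M₁₃ M₂₁ M₂₂ M₂₃ M₃₁ M₃₂ M₃₃ - b3 N₁₁ N₁₂ N₁₃ N₂₁ N₂₂ N₂₃ N₃₁ N₃₂ N₃₃ =
      b3 (M₁₁ - N₁₁) (M₁₂ - N₁₂) (M₁₃ - N₁₃) (M₂₁ - N₂₁) (M₂₂ - N₂₂) (M₂₃ - N₂₃)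
        (M₃₁ - N₃₁) (M₃₂ - N₃₂) (M₃₃ - N₃₃) := by
  ext (i | i | i) (j | j | j) <;> rfl

theorem one_sub_b3 [AddGroupWithOne α] [DecidableEq n₁] [DecidableEq n₂] [DecidableEq n₃]
    (M₁₁ : Matrix n₁ n₁ α) (M₁₂ : Matrix n₁ n₂ α) (M₁₃ : Matrix n₁ n₃ α)
    (M₂₁ : Matrix n₂ n₁ α) (M₂₂ : Matrix n₂ n₂ α) (M₂₃ : Matrix n₂ n₃ α)
    (M₃₁ : Matrix n₃ n₁ α) (M₃₂ : Matrix n₃ n₂ α) (M₃₃ : Matrix n₃ n₃ α) :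
    1 - b3 M₁₁ M₁₂ M₁₃ M₂₁ M₂₂ M₂₃ M₃₁ M₃₂ M₃₃ =
      b3 (1 - M₁₁) (-M₁₂) (-M₁₃) (-M₂₁) (1 - M₂₂) (-M₂₃) (-M₃₁) (-M₃₂) (1 - M₃₃) := by
  rw [← b3_one, b3_sub]
  simp only [zero_sub]

theorem b3_mul [NonUnitalNonAssocSemiring α] [Fintype m₁] [Fintype m₂] [Fintype m₃]
    (A₁₁ : Matrix n₁ m₁ α) (A₁₂ : Matrix n₁ m₂ α) (A₁₃ : Matrix n₁ m₃ α)
    (A₂₁ : Matrix n₂ m₁ α) (A₂₂ : Matrix n₂ m₂ α) (A₂₃ : Matrix n₂ m₃ α)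
    (A₃₁ : Matrix n₃ m₁ α) (A₃₂ : Matrix n₃ m₂ α) (A₃₃ : Matrix n₃ m₃ α)
    (B₁₁ : Matrix m₁ k₁ α) (B₁₂ : Matrix m₁ k₂ α) (B₁₃ : Matrix m₁ k₃ α)
    (B₂₁ : Matrix m₂ k₁ α) (B₂₂ : Matrix m₂ k₂ α) (B₂₃ : Matrix m₂ k₃ α)
    (B₃₁ : Matrix m₃ k₁ α) (B₃₂ : Matrix m₃ k₂ α) (B₃₃ : Matrix m₃ k₃ α) :
    b3 A₁₁ A₁₂ A₁₃ A₂₁ A₂₂ A₂₃ A₃₁ A₃₂ A₃₃ * b3 B₁₁ B₁₂ B₁₃ B₂₁ B₂₂ B₂₃ B₃₁ B₃₂ B₃₃ =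
      b3 (A₁₁ * B₁₁ + A₁₂ * B₂₁ + A₁₃ * B₃₁) (A₁₁ * B₁₂ + A₁₂ * B₂₂ + A₁₃ * B₃₂)
        (A₁₁ * B₁₃ + A₁₂ * B₂₃ + A₁₃ * B₃₃)
        (A₂₁ * B₁₁ + A₂₂ * B₂₁ + A₂₃ * B₃₁) (A₂₁ * B₁₂ + A₂₂ * B₂₂ + A₂₃ * B₃₂)
        (A₂₁ * B₁₃ + A₂₂ * B₂₃ + A₂₃ * B₃₃)
        (A₃₁ * B₁₁ + A₃₂ * B₂₁ + A₃₃ * B₃₁) (A₃₁ * B₁₂ + A₃₂ * B₂₂ + A₃₃ * B₃₂)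
        (A₃₁ * B₁₃ + A₃₂ * B₂₃ + A₃₃ * B₃₃) := by
  ext (i | i | i) (j | j | j) <;>
    simp [b3, mul_apply, Fintype.sum_sum_type, add_assoc]

end BlockMatrix

theorem sub_transfer_mul_eq {α n m p k : Type*} [CommRing α] [Fintype n] [DecidableEq n]
    [Fintype m] {Z : Matrix n n α} (hZ : IsUnit Z.det) {B : Matrix n m α} {C : Matrix p n α}
    {D : Matrix p m α} {Φx W : Matrix n k α} {Φu : Matrix m k α} {Sy V : Matrix p k α}
    (hx : Z * Φx - B * Φu = W) (hy : Sy - C * Φx - D * Φu = V) :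
    Sy - (C * Z⁻¹ * B + D) * Φu = C * Z⁻¹ * W + V := by
  have hΦx : Φx = Z⁻¹ * W + Z⁻¹ * (B * Φu) := by
    rw [← Matrix.mul_add, ← hx, sub_add_cancel, nonsing_inv_mul_cancel_left _ _ hZ]
  rw [← hy, hΦx]
  simp only [Matrix.mul_add, Matrix.add_mul, Matrix.mul_assoc]
  abel

/-- **Mixed parameterization identities** (Corollary 6, algebraic core).
If `S` is a stability matrix for the output-feedback realization with controller `K`,
`z•1 - A` is invertible and `G := C (z•1 - A)⁻¹ B + D`, then the blocks
`(Syx, Syy, Φux, Φuy)` of `S` satisfy the mixed-parameterization identities. -/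
theorem mixed_parameterization {n m p : Type*} [Fintype n] [Fintype m] [Fintype p]
    [DecidableEq n] [DecidableEq m] [DecidableEq p]
    (A : Matrix n n ℝ) (B : Matrix n m ℝ) (C : Matrix p n ℝ) (D : Matrix p m ℝ)
    (K : Matrix m p (RatFunc ℝ))
    (Φxx : Matrix n n (RatFunc ℝ)) (Sxu : Matrix n m (RatFunc ℝ)) (Φxy : Matrix n p (RatFunc ℝ))
    (Φux : Matrix m n (RatFunc ℝ)) (Suu : Matrix m m (RatFunc ℝ)) (Φuy : Matrix m p (RatFunc ℝ))
    (Syx : Matrix p n (RatFunc ℝ)) (Syu : Matrix p m (RatFunc ℝ)) (Syy : Matrix p p (RatFunc ℝ))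
    (hL : (1 - b3 (mR A + (1 - zz) • (1 : Matrix n n (RatFunc ℝ))) (mR B)
            (0 : Matrix n p (RatFunc ℝ))
            (0 : Matrix m n (RatFunc ℝ)) (0 : Matrix m m (RatFunc ℝ)) K
            (mR C) (mR D) (0 : Matrix p p (RatFunc ℝ))) *
          b3 Φxx Sxu Φxy Φux Suu Φuy Syx Syu Syy = 1)
    (hR : b3 Φxx Sxu Φxy Φux Suu Φuy Syx Syu Syy *
          (1 - b3 (mR A + (1 - zz) • (1 : Matrix n n (RatFunc ℝ))) (mR B)
            (0 : Matrix n p (RatFunc ℝ))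
            (0 : Matrix m n (RatFunc ℝ)) (0 : Matrix m m (RatFunc ℝ)) K
            (mR C) (mR D) (0 : Matrix p p (RatFunc ℝ))) = 1)
    (hA : IsUnit (zz • (1 : Matrix n n (RatFunc ℝ)) - mR A)) :
    let Z := zz • (1 : Matrix n n (RatFunc ℝ)) - mR A
    let G := mR C * Z⁻¹ * mR B + mR D
    Syx - G * Φux = mR C * Z⁻¹ ∧
    Syy - G * Φuy = 1 ∧
    Syx * Z = Syy * mR C ∧
    Φux * Z = Φuy * mR C := by
  intro Z G
  have hZ : 1 - (mR A + (1 - zz) • (1 : Matrix n n (RatFunc ℝ))) = Z := by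
    simp only [Z, sub_smul, one_smul]
    abel
  rw [one_sub_b3, hZ, b3_mul, ← b3_one, b3_inj] at hL hR
  obtain ⟨h₁₁, -, h₁₃, -, -, -, h₃₁, -, h₃₃⟩ := hL
  obtain ⟨-, -, -, h₂₁', -, -, h₃₁', -, -⟩ := hR
  simp only [Matrix.zero_mul, Matrix.mul_zero, add_zero, Matrix.neg_mul, Matrix.mul_neg,
    Matrix.one_mul, neg_zero, sub_zero, ← sub_eq_add_neg] at h₁₁ h₁₃ h₃₁ h₃₃ h₂₁' h₃₁'
  have hdet : IsUnit Z.det := (isUnit_iff_isUnit_det Z).mp hA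
  refine ⟨?_, ?_, sub_eq_zero.mp h₃₁', sub_eq_zero.mp h₂₁'⟩
  · have hSyx : Syx - mR C * Φxx - mR D * Φux = 0 := by rw [← h₃₁]; abel
    simpa using sub_transfer_mul_eq hdet h₁₁ hSyx
  · have hSyy : Syy - mR C * Φxy - mR D * Φuy = 1 := by rw [← h₃₃]; abel
    simpa using sub_transfer_mul_eq hdet h₁₃ hSyy

end
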